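/- Let T ⊆ Q[x_1,...,x_n] be a strong chain and f ∈ Q[x_1,...,x_n]. If V(T) ∩ V(f) is nonempty, then there exists a polynomial g ∈ C[x_1,...,x_n] with g ∉ <T> such that f·g ∈ <T>; that is, f is a zero divisor modulo <T>. -/

import Mathlib

/-!
After scaling by the inverse of its initial, `T i` is monic in `x_i` with coefficients in
the earlier variables. By induction on `i`, the class of every `x_i` in `A = ℂ[x] ⧸ ⟨T⟩` is
therefore integral over `ℂ`, so `A` is a finite-dimensional `ℂ`-algebra, hence Artinian, and
in an Artinian ring every non-unit is a zero divisor. The class of `f` is not a unit: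
evaluation at a common zero of `T` and `f` factors through `A` and kills it.
-/

open MvPolynomial

def IsStrongChain {n : ℕ} (T : Fin n → MvPolynomial (Fin n) ℚ) : Prop :=
  ∀ i : Fin n,
    (∀ j ∈ (T i).vars, j ≤ i) ∧ 1 ≤ MvPolynomial.degreeOf i (T i) ∧
    ∃ c : ℚ, c ≠ 0 ∧
      MvPolynomial.degreeOf i (T i - C c * X i ^ (MvPolynomial.degreeOf i (T i)))
        < MvPolynomial.degreeOf i (T i)

noncomputable def toC {n : ℕ} (f : MvPolynomial (Fin n) ℚ) : MvPolynomial (Fin n) ℂ :=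
  MvPolynomial.map (algebraMap ℚ ℂ) f

namespace MvPolynomial

theorem degreeOf_map_le {R S σ : Type*} [CommSemiring R] [CommSemiring S] (f : R →+* S) (i : σ)
    (p : MvPolynomial σ R) : degreeOf i (map f p) ≤ degreeOf i p := by
  rw [degreeOf_eq_sup, degreeOf_eq_sup]
  exact Finset.sup_mono (support_map_subset _ _)

variable {R A σ : Type*} [CommRing R] [CommRing A] [Algebra R A]

theorem isIntegral_aeval {x : σ → A} (hx : ∀ j, IsIntegral R (x j)) (p : MvPolynomial σ R) :
    IsIntegral R (aeval x p) :=
  Algebra.adjoin_le (S := integralClosure R A) (Set.range_subset_iff.2 hx)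
    (aeval_range (R := R) x ▸ AlgHom.mem_range_self _ p)

theorem isIntegral_quotient_of_isIntegral_mk_X {I : Ideal (MvPolynomial σ R)}
    (h : ∀ j, IsIntegral R (Ideal.Quotient.mk I (X j))) :
    Algebra.IsIntegral R (MvPolynomial σ R ⧸ I) := by
  refine ⟨fun a => ?_⟩
  obtain ⟨p, rfl⟩ := Ideal.Quotient.mk_surjective a
  rw [← Ideal.Quotient.mkₐ_eq_mk R, aeval_unique (Ideal.Quotient.mkₐ R I)]
  exact isIntegral_aeval h p

variable [DecidableEq σ]

-- `p` as a polynomial in `X i` whose coefficients are polynomials in the other variables.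
noncomputable def polynomialIn (i : σ) :
    MvPolynomial σ R →ₐ[R] Polynomial (MvPolynomial {j // j ≠ i} R) :=
  (optionEquivLeft R _).toAlgHom.comp (rename (Equiv.optionSubtypeNe i).symm)

theorem natDegree_polynomialIn (i : σ) (p : MvPolynomial σ R) :
    (polynomialIn i p).natDegree = degreeOf i p :=
  (degreeOf_eq_natDegree i p).symm

@[simp]
theorem polynomialIn_X_self (i : σ) : polynomialIn (R := R) i (X i) = Polynomial.X := by
  simp [polynomialIn]

theorem aeval_eq_eval_map_polynomialIn (x : σ → A) (i : σ) (p : MvPolynomial σ R) :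
    aeval x p =
      ((polynomialIn i p).map (aeval fun j : {j // j ≠ i} => x j).toRingHom).eval (x i) := by
  induction p using MvPolynomial.induction_on with
  | C a => simp [polynomialIn]
  | add p q hp hq => simp [hp, hq]
  | mul_X p j hp =>
    by_cases hj : j = i
    · subst hj; simp [hp]
    · simp [polynomialIn, hp, hj]

theorem monic_polynomialIn {i : σ} {p : MvPolynomial σ R} {d : ℕ} [Nontrivial R]
    (hlt : degreeOf i (p - X i ^ d) < d) :
    (polynomialIn i p).Monic ∧ (polynomialIn i p).natDegree = d := by
  have hrest : (polynomialIn i (p - X i ^ d)).degree < d :=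
    Polynomial.degree_le_natDegree.trans_lt (by rwa [natDegree_polynomialIn, Nat.cast_lt])
  have hsplit : polynomialIn i p = Polynomial.X ^ d + polynomialIn i (p - X i ^ d) := by simp
  rw [hsplit]
  exact ⟨Polynomial.monic_X_pow_add hrest, by
    rw [Polynomial.natDegree_add_eq_left_of_degree_lt (by rwa [Polynomial.degree_X_pow]),
      Polynomial.natDegree_X_pow]⟩

theorem isIntegral_of_aeval_eq_zero {x : σ → A} {i : σ} (hx : ∀ j ≠ i, IsIntegral R (x j))
    {p : MvPolynomial σ R} {d : ℕ} (hd : d ≠ 0) (hlt : degreeOf i (p - X i ^ d) < d)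
    (hp : aeval x p = 0) : IsIntegral R (x i) := by
  nontriviality A
  have : Nontrivial R := (algebraMap R A).domain_nontrivial
  obtain ⟨hmonic, hdeg⟩ := monic_polynomialIn hlt
  let φ := (aeval (R := R) fun j : {j // j ≠ i} => x j).toRingHom
  refine IsIntegral.of_aeval_monic_of_isIntegral_coeff (hmonic.map φ)
    (by rwa [hmonic.natDegree_map, hdeg]) ?_ fun k => ?_
  · rw [← aeval_eq_eval_map_polynomialIn, hp]
    exact isIntegral_zero
  · rw [Polynomial.coeff_map]
    exact isIntegral_aeval (fun j : {j // j ≠ i} => hx j j.2) _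

end MvPolynomial

namespace Ideal
variable {B : Type*} [CommRing B] {I : Ideal B}

theorem not_isUnit_mk_of_map_eq_zero {K : Type*} [CommRing K] [Nontrivial K] (φ : B →+* K)
    (hI : I ≤ RingHom.ker φ) {f : B} (hf : φ f = 0) : ¬IsUnit (Quotient.mk I f) := fun hu => by
  have : IsUnit (φ f) := hu.map (Quotient.lift I φ hI)
  exact not_isUnit_zero (hf ▸ this)

theorem exists_notMem_mul_mem_of_not_isUnit [IsArtinianRing (B ⧸ I)] {f : B}
    (hf : ¬IsUnit (Quotient.mk I f)) : ∃ g ∉ I, f * g ∈ I := by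
  rw [IsArtinianRing.isUnit_iff_mem_nonZeroDivisors, mem_nonZeroDivisors_iff_right] at hf
  push Not at hf
  obtain ⟨y, hy, hy0⟩ := hf
  obtain ⟨g, rfl⟩ := Quotient.mk_surjective y
  refine ⟨g, fun hg => hy0 (Quotient.eq_zero_iff_mem.2 hg), Quotient.eq_zero_iff_mem.1 ?_⟩
  simpa [mul_comm] using hy

end Ideal

namespace IsStrongChain
variable {n : ℕ} {T : Fin n → MvPolynomial (Fin n) ℚ}

theorem exists_mem_span_degreeOf_sub_lt (hT : IsStrongChain T) (i : Fin n) :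
    ∃ p ∈ Ideal.span (Set.range fun j => toC (T j)), (∀ j ∈ p.vars, j ≤ i) ∧
      ∃ d ≠ 0, degreeOf i (p - X i ^ d) < d := by
  obtain ⟨hvars, hd, c, hc, hlt⟩ := hT i
  have hc' : (c : ℂ) ≠ 0 := by exact_mod_cast hc
  refine ⟨C (c : ℂ)⁻¹ * toC (T i), Ideal.mul_mem_left _ _ (Ideal.subset_span ⟨i, rfl⟩),
    fun j hj => hvars j (vars_map _ _ (vars_C_mul _ (inv_ne_zero hc') _ ▸ hj)),
    degreeOf i (T i), by omega, ?_⟩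
  have hsub : C (c : ℂ)⁻¹ * toC (T i) - X i ^ degreeOf i (T i)
      = C (c : ℂ)⁻¹ * toC (T i - C c * X i ^ degreeOf i (T i)) := by
    simp [toC, mul_sub, ← mul_assoc, ← C_mul, inv_mul_cancel₀ hc']
  calc degreeOf i (C (c : ℂ)⁻¹ * toC (T i) - X i ^ degreeOf i (T i))
      ≤ degreeOf i (toC (T i - C c * X i ^ degreeOf i (T i))) := hsub ▸ degreeOf_C_mul_le _ _ _
    _ ≤ degreeOf i (T i - C c * X i ^ degreeOf i (T i)) := degreeOf_map_le _ _ _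
    _ < degreeOf i (T i) := hlt

theorem isIntegral_mk_X (hT : IsStrongChain T) (i : Fin n) :
    IsIntegral ℂ (Ideal.Quotient.mk (Ideal.span (Set.range fun j => toC (T j))) (X i)) := by
  induction i using WellFoundedLT.induction with
  | _ i ih =>
    obtain ⟨p, hpI, hvars, d, hd, hlt⟩ := hT.exists_mem_span_degreeOf_sub_lt i
    set I := Ideal.span (Set.range fun j => toC (T j))
    -- The variables `x_j`, `j > i`, do not occur in `p`: sending them to the integral element `0`
    -- leaves `p(x) = 0` intact.
    let x : Fin n → MvPolynomial (Fin n) ℂ ⧸ I := fun j =>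
      if j ≤ i then Ideal.Quotient.mk I (X j) else 0
    have hx : ∀ j ≠ i, IsIntegral ℂ (x j) := fun j hj => by
      by_cases hji : j ≤ i
      · simpa [x, hji] using ih j (lt_of_le_of_ne hji hj)
      · simpa [x, hji] using isIntegral_zero
    have hp : aeval x p = 0 := by
      rw [← Ideal.Quotient.eq_zero_iff_mem.2 hpI]
      exact hom_congr_vars (f₁ := (aeval x).toRingHom)
        (by ext; simp [← Ideal.Quotient.mk_algebraMap])
        (fun j hj _ => by simp [x, hvars j hj]) rfl
    simpa [x] using isIntegral_of_aeval_eq_zero hx hd hlt hp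

theorem finite_quotient (hT : IsStrongChain T) :
    Module.Finite ℂ (MvPolynomial (Fin n) ℂ ⧸ Ideal.span (Set.range fun i => toC (T i))) :=
  have := isIntegral_quotient_of_isIntegral_mk_X hT.isIntegral_mk_X
  Algebra.IsIntegral.finite

end IsStrongChain

/-- if `T` is a strong chain, `f ∈ ℚ[x_1,...,x_n]` and `V(T) ∩ V(f) ≠ ∅`,
then `f` is a zero divisor modulo `⟨T⟩` in `ℂ[x_1,...,x_n]`: there is `g ∉ ⟨T⟩` with
`f·g ∈ ⟨T⟩`. -/
theorem stmt_7 {n : ℕ} (T : Fin n → MvPolynomial (Fin n) ℚ) (hT : IsStrongChain T)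
    (f : MvPolynomial (Fin n) ℚ)
    (hmeet : ∃ p : Fin n → ℂ,
      (∀ i : Fin n, MvPolynomial.eval p (toC (T i)) = 0) ∧ MvPolynomial.eval p (toC f) = 0) :
    ∃ g : MvPolynomial (Fin n) ℂ,
      g ∉ Ideal.span (Set.range fun i => toC (T i)) ∧
      toC f * g ∈ Ideal.span (Set.range fun i => toC (T i)) := by
  obtain ⟨p, hpT, hpf⟩ := hmeet
  have := hT.finite_quotient
  have := IsArtinianRing.of_finite ℂ
    (MvPolynomial (Fin n) ℂ ⧸ Ideal.span (Set.range fun i => toC (T i)))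
  have hker : Ideal.span (Set.range fun i => toC (T i)) ≤ RingHom.ker (eval p) :=
    Ideal.span_le.2 (Set.range_subset_iff.2 hpT)
  exact Ideal.exists_notMem_mul_mem_of_not_isUnit
    (Ideal.not_isUnit_mk_of_map_eq_zero (eval p) hker hpf)
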